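/- If S = ∞, then there exists a constant C > 0 such that f(z) ≥ C(√z − 1) for all z > 0. -/

import Mathlib

/-!
A positive concave function on `(0, ∞)` lies, up to a factor `2`, between two linear functions:
`x * m y ≤ 2 * y * m x` for `0 < x ≤ y`. Comparing with `m 1`, the integrand `√(2 / m r)` is
`O(r^(-1/2))` near `0`, so the integral is finite, and at least `(m 1)^(-1/2) r^(-1/2)` for
`r ≥ 1`, whose integral over `(1, z)` is `2 (m 1)^(-1/2) (√z - 1)`.
-/

open MeasureTheory Set Filter Topology

theorem ContDiffOn.concaveOn_of_deriv2_nonpos {s : Set ℝ} {f : ℝ → ℝ} (hs : IsOpen s)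
    (hs' : Convex ℝ s) (hf : ContDiffOn ℝ 2 f s) (hf'' : ∀ x ∈ s, deriv (deriv f) x ≤ 0) :
    ConcaveOn ℝ s f :=
  concaveOn_of_deriv2_nonpos' hs' (hf.differentiableOn (by norm_num))
    ((hf.deriv_of_isOpen (m := 1) hs (by norm_num)).differentiableOn (by norm_num)) hf''

/-- The secant slope over `[x, y]` is at most the one over `[x/2, x]`, which is at most
`f x / (x/2)` because `f (x/2) ≥ 0`. -/
theorem ConcaveOn.mul_le_two_mul_mul_of_nonneg {f : ℝ → ℝ} (hf : ConcaveOn ℝ (Ioi 0) f)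
    (hf₀ : ∀ x, 0 < x → 0 ≤ f x) {x y : ℝ} (hx : 0 < x) (hxy : x ≤ y) :
    x * f y ≤ 2 * y * f x := by
  rcases hxy.eq_or_lt with rfl | hxy
  · nlinarith [hf₀ x hx]
  have hslope := hf.slope_anti_adjacent (half_pos hx) (hx.trans hxy) (half_lt_self hx) hxy
  rw [sub_half, div_le_div_iff₀ (by linarith) (by linarith)] at hslope
  nlinarith [hf₀ x hx, hf₀ (x / 2) (half_pos hx)]

theorem Real.inv_sqrt_eq_rpow {x : ℝ} (hx : 0 ≤ x) : (√x)⁻¹ = x ^ (-(1 / 2) : ℝ) := by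
  rw [Real.sqrt_eq_rpow, Real.rpow_neg hx]

theorem intervalIntegrable_inv_sqrt {a b : ℝ} (ha : 0 ≤ a) (hb : 0 ≤ b) :
    IntervalIntegrable (fun x => (√x)⁻¹) volume a b :=
  (intervalIntegrable_congr fun x hx =>
      (Real.inv_sqrt_eq_rpow ((le_min ha hb).trans hx.1.le)).symm).mp
    (intervalIntegral.intervalIntegrable_rpow' (by norm_num))

theorem integral_inv_sqrt {a b : ℝ} (ha : 0 ≤ a) (hb : 0 ≤ b) :
    ∫ x in a..b, (√x)⁻¹ = 2 * (√b - √a) := by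
  rw [intervalIntegral.integral_congr fun x hx => Real.inv_sqrt_eq_rpow ((le_min ha hb).trans hx.1),
    integral_rpow (Or.inl (by norm_num)), Real.sqrt_eq_rpow, Real.sqrt_eq_rpow]
  norm_num
  ring

theorem integrableOn_Ioo_zero_of_norm_le_mul_inv_sqrt {g : ℝ → ℝ} {C : ℝ}
    (hg : ContinuousOn g (Ioi 0)) (hle : ∀ r ∈ Ioo 0 1, ‖g r‖ ≤ C * (√r)⁻¹) (z : ℝ) :
    IntegrableOn g (Ioo 0 z) := by
  have hnear : IntegrableOn g (Ioo 0 1) := by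
    have hdom : IntegrableOn (fun r => C * (√r)⁻¹) (Ioo 0 1) := by
      rw [← intervalIntegrable_iff_integrableOn_Ioo_of_le zero_le_one]
      exact (intervalIntegrable_inv_sqrt le_rfl zero_le_one).const_mul C
    refine hdom.mono' ((hg.mono Ioo_subset_Ioi_self).aestronglyMeasurable measurableSet_Ioo) ?_
    exact (ae_restrict_mem measurableSet_Ioo).mono hle
  have hfar : IntegrableOn g (Icc 1 (max 1 z)) :=
    (hg.mono fun r hr => zero_lt_one.trans_le hr.1).integrableOn_Icc
  refine (hnear.union hfar).mono_set fun r hr => ?_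
  rcases lt_or_ge r 1 with hr1 | hr1
  · exact Or.inl ⟨hr.1, hr1⟩
  · exact Or.inr ⟨hr1, hr.2.le.trans (le_max_right _ _)⟩

theorem two_mul_mul_sqrt_sub_one_le_setIntegral_Ioo {g : ℝ → ℝ} {c z : ℝ} (hc : 0 ≤ c)
    (hg₀ : ∀ r, 0 ≤ g r) (hg : IntegrableOn g (Ioo 0 z))
    (hlow : ∀ r, 1 ≤ r → c * (√r)⁻¹ ≤ g r) :
    2 * c * (√z - 1) ≤ ∫ r in Ioo 0 z, g r := by
  rcases le_or_gt z 1 with hz1 | hz1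
  · have hsqrt : √z ≤ 1 := Real.sqrt_le_one.mpr hz1
    have hint : 0 ≤ ∫ r in Ioo 0 z, g r := setIntegral_nonneg measurableSet_Ioo fun r _ => hg₀ r
    nlinarith
  have hsub : Ioo 1 z ⊆ Ioo 0 z := Ioo_subset_Ioo_left zero_le_one
  calc 2 * c * (√z - 1) = ∫ r in (1 : ℝ)..z, c * (√r)⁻¹ := by
        rw [intervalIntegral.integral_const_mul, integral_inv_sqrt zero_le_one (by linarith),
          Real.sqrt_one]
        ring
    _ ≤ ∫ r in (1 : ℝ)..z, g r :=
        intervalIntegral.integral_mono_on hz1.le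
          ((intervalIntegrable_inv_sqrt zero_le_one (by linarith)).const_mul c)
          ((intervalIntegrable_iff_integrableOn_Ioo_of_le hz1.le).mpr (hg.mono_set hsub))
          fun r hr => hlow r hr.1
    _ = ∫ r in Ioo 1 z, g r := by
        rw [intervalIntegral.integral_of_le hz1.le, integral_Ioc_eq_integral_Ioo]
    _ ≤ ∫ r in Ioo 0 z, g r :=
        setIntegral_mono_set hg (Eventually.of_forall fun r => hg₀ r) hsub.eventuallyLE

theorem Real.sqrt_two_div_le_two_mul_inv_sqrt_mul_inv_sqrt {a b r : ℝ} (ha : 0 < a) (hb : 0 < b)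
    (hr : 0 < r) (h : r * a ≤ 2 * b) : √(2 / b) ≤ 2 * (√a)⁻¹ * (√r)⁻¹ := by
  rw [Real.sqrt_le_iff, mul_pow, mul_pow, inv_pow, inv_pow, Real.sq_sqrt ha.le,
    Real.sq_sqrt hr.le, div_le_iff₀ hb]
  refine ⟨by positivity, ?_⟩
  field_simp
  nlinarith

theorem Real.inv_sqrt_mul_inv_sqrt_le_sqrt_two_div {a b r : ℝ} (ha : 0 < a) (hb : 0 < b)
    (hr : 0 < r) (h : b ≤ 2 * r * a) : (√a)⁻¹ * (√r)⁻¹ ≤ √(2 / b) := by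
  rw [Real.le_sqrt (by positivity) (by positivity), mul_pow, inv_pow, inv_pow, Real.sq_sqrt ha.le,
    Real.sq_sqrt hr.le, le_div_iff₀ hb]
  field_simp
  nlinarith

theorem f_lower_bound_sqrt_general
    (m : ℝ → ℝ)
    (hm_c2 : ContDiffOn ℝ 2 m (Ioi 0))
    (hm_pos : ∀ z : ℝ, 0 < z → 0 < m z)
    (hm_conc : ∀ z : ℝ, 0 < z → deriv (deriv m) z ≤ 0) :
    ∃ C : ℝ, 0 < C ∧ ∀ z : ℝ, 0 < z →
      C * (Real.sqrt z - 1) ≤ ∫ r in Ioo (0 : ℝ) z, Real.sqrt (2 / m r) := by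
  have hm1 : 0 < m 1 := hm_pos 1 one_pos
  have hgrowth {x y : ℝ} (hx : 0 < x) (hxy : x ≤ y) : x * m y ≤ 2 * y * m x :=
    (hm_c2.concaveOn_of_deriv2_nonpos isOpen_Ioi (convex_Ioi 0) hm_conc)
      |>.mul_le_two_mul_mul_of_nonneg (fun x hx => (hm_pos x hx).le) hx hxy
  have hcont : ContinuousOn (fun r => √(2 / m r)) (Ioi 0) :=
    (continuousOn_const.div hm_c2.continuousOn fun r hr => (hm_pos r hr).ne').sqrt
  have hnear : ∀ r ∈ Ioo (0 : ℝ) 1, ‖√(2 / m r)‖ ≤ 2 * (√(m 1))⁻¹ * (√r)⁻¹ := by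
    rintro r ⟨hr, hr1⟩
    rw [Real.norm_of_nonneg (Real.sqrt_nonneg _)]
    exact Real.sqrt_two_div_le_two_mul_inv_sqrt_mul_inv_sqrt hm1 (hm_pos r hr) hr
      (by linarith [hgrowth hr hr1.le])
  have hfar (r : ℝ) (hr : 1 ≤ r) : (√(m 1))⁻¹ * (√r)⁻¹ ≤ √(2 / m r) :=
    Real.inv_sqrt_mul_inv_sqrt_le_sqrt_two_div hm1 (hm_pos r (by linarith)) (by linarith)
      (by linarith [hgrowth one_pos hr])
  refine ⟨2 * (√(m 1))⁻¹, by positivity, fun z _ => ?_⟩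
  exact two_mul_mul_sqrt_sub_one_le_setIntegral_Ioo (by positivity) (fun r => Real.sqrt_nonneg _)
    (integrableOn_Ioo_zero_of_norm_le_mul_inv_sqrt hcont hnear z) hfar

/-- For `S = ∞` and `m` satisfying (M) on `(0,∞)`, with
`f(z) := ∫₀^z √(2/m(r)) dr`, there exists `C > 0` such that `f(z) ≥ C(√z − 1)`
for all `z > 0`. -/
theorem f_lower_bound_sqrt
    (m : ℝ → ℝ)
    (hm_c2 : ContDiffOn ℝ 2 m (Ioi 0))
    (hm_pos : ∀ z : ℝ, 0 < z → 0 < m z)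
    (hm_conc : ∀ z : ℝ, 0 < z → deriv (deriv m) z ≤ 0)
    (hm0 : Tendsto m (𝓝[>] (0 : ℝ)) (𝓝 0)) :
    ∃ C : ℝ, 0 < C ∧ ∀ z : ℝ, 0 < z →
      C * (Real.sqrt z - 1) ≤ ∫ r in Ioo (0 : ℝ) z, Real.sqrt (2 / m r) :=
  f_lower_bound_sqrt_general m hm_c2 hm_pos hm_conc
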